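/- arXiv:0811.2046 — 2 statements merged into one kernel-verified Lean document; each statement's English description precedes it below -/
import Mathlib

section
/- Let α > 1 and γ = 1/α. Let G_γ and G_{1-γ} be independent gamma random variables with parameters γ and 1-γ. Then (G_γ/G_{1-γ})^γ has density (sin(π/α)/(π/α)) · 1/(1+x^α) on (0,∞). -/
open Real MeasureTheory ProbabilityTheory Set
open scoped ENNReal

section helpers

lemma lintegral_image_eq_lintegral_abs_deriv_mul' {s : Set ℝ} {f f' : ℝ → ℝ}
    (hs : MeasurableSet s) (hf' : ∀ x ∈ s, HasDerivWithinAt f (f' x) s x)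
    (hf : Set.InjOn f s) (g : ℝ → ℝ≥0∞) :
    ∫⁻ x in (f '' s), g x = ∫⁻ x in s, ENNReal.ofReal |f' x| * g (f x) := by
  simpa only [ContinuousLinearMap.det_toSpanSingleton] using
    lintegral_image_eq_lintegral_abs_det_fderiv_mul volume hs
      (fun x hx => (hf' x hx).hasFDerivWithinAt) hf g

lemma image_mul_left_Ioi0 {y : ℝ} (hy : 0 < y) : (fun u => y * u) '' Ioi (0:ℝ) = Ioi 0 := by
  ext x
  constructor
  · rintro ⟨u, hu, rfl⟩; exact mul_pos hy hu
  · intro hx; exact ⟨x / y, div_pos hx hy, by field_simp⟩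

lemma image_rpow_Ioi0 {p : ℝ} (hp : 0 < p) : (fun t : ℝ => t ^ p) '' Ioi (0:ℝ) = Ioi 0 := by
  ext x
  constructor
  · rintro ⟨t, ht, rfl⟩; exact Real.rpow_pos_of_pos ht p
  · intro hx
    exact ⟨x ^ p⁻¹, Real.rpow_pos_of_pos hx _, by
      show (x ^ p⁻¹ : ℝ) ^ p = x
      rw [← Real.rpow_mul hx.le, inv_mul_cancel₀ hp.ne', Real.rpow_one]⟩

lemma lint_exp {c : ℝ} (hc : 0 < c) :
    ∫⁻ y in Ioi (0:ℝ), ENNReal.ofReal (Real.exp (-(c * y))) = ENNReal.ofReal (1 / c) := by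
  rw [← ofReal_integral_eq_lintegral_ofReal]
  · congr 1
    have h := integral_rpow_mul_exp_neg_mul_Ioi one_pos hc
    rw [setIntegral_congr_fun measurableSet_Ioi (fun t ht => by
      simp [Real.rpow_zero] : EqOn (fun t : ℝ => Real.exp (-(c*t))) (fun t : ℝ => t ^ (1-1:ℝ) * Real.exp (-(c*t))) (Ioi 0)), h]
    simp [Real.Gamma_one]
  · exact (exp_neg_integrableOn_Ioi 0 hc).congr_fun (fun x _ => by ring_nf) measurableSet_Ioi
  · exact Filter.Eventually.of_forall fun x => (Real.exp_pos _).le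

lemma lintegral_eq_Ioi (H : ℝ → ℝ≥0∞) (h : ∀ y ≤ 0, H y = 0) :
    ∫⁻ y, H y = ∫⁻ y in Ioi (0:ℝ), H y := by
  rw [← lintegral_indicator measurableSet_Ioi]
  congr 1
  funext y
  by_cases hy : (0:ℝ) < y
  · simp [indicator, hy]
  · simp [indicator, hy, h y (le_of_not_gt hy)]

end helpers

/-- Density of the gamma distribution with shape parameter `a` (rate 1). -/
noncomputable def gammaD (a : ℝ) : ℝ → ENNReal := fun x =>
  ENNReal.ofReal (if 0 < x then x ^ (a - 1) * Real.exp (-x) / Real.Gamma a else 0)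

lemma measurable_gammaD (a : ℝ) : Measurable (gammaD a) := by
  unfold gammaD
  apply ENNReal.measurable_ofReal.comp
  apply Measurable.ite measurableSet_Ioi _ measurable_const
  fun_prop

lemma gammaD_pos {a x : ℝ} (hx : 0 < x) :
    gammaD a x = ENNReal.ofReal (x ^ (a - 1) * Real.exp (-x) / Real.Gamma a) := by
  simp [gammaD, if_pos hx]

lemma gammaD_nonpos {a x : ℝ} (hx : x ≤ 0) : gammaD a x = 0 := by
  simp [gammaD, not_lt.mpr hx]

theorem stmt_6 {Ω : Type*} [MeasurableSpace Ω] (μ : Measure Ω) [IsProbabilityMeasure μ]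
    (α : ℝ) (hα : 1 < α)
    (X Y : Ω → ℝ) (hX : Measurable X) (hY : Measurable Y)
    (hind : IndepFun X Y μ)
    (hlawX : μ.map X = (volume : Measure ℝ).withDensity (gammaD (1 / α)))
    (hlawY : μ.map Y = (volume : Measure ℝ).withDensity (gammaD (1 - 1 / α))) :
    μ.map (fun ω => (X ω / Y ω) ^ (1 / α))
      = (volume : Measure ℝ).withDensity (fun x =>
          ENNReal.ofReal (if 0 < x then
            (Real.sin (π / α) / (π / α)) * (1 / (1 + x ^ α)) else 0)) := by
  have hα0 : (0:ℝ) < α := lt_trans one_pos hα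
  set D : ℝ → ℝ≥0∞ := fun x => ENNReal.ofReal (if 0 < x then
      (Real.sin (π / α) / (π / α)) * (1 / (1 + x ^ α)) else 0) with hDdef
  set γ : ℝ := 1 / α with hγdef
  have hγ0 : 0 < γ := by positivity
  have hγ1 : γ < 1 := by rw [hγdef, div_lt_one hα0]; exact hα
  have hαγ : α * γ = 1 := by rw [hγdef]; field_simp
  have hΓa : 0 < Real.Gamma γ := Real.Gamma_pos_of_pos hγ0
  have hΓb : 0 < Real.Gamma (1 - γ) := Real.Gamma_pos_of_pos (by linarith)
  set ga : ℝ → ℝ≥0∞ := gammaD γ with hgadef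
  set gb : ℝ → ℝ≥0∞ := gammaD (1 - γ) with hgbdef
  have hga : Measurable ga := measurable_gammaD γ
  have hgb : Measurable gb := measurable_gammaD (1 - γ)
  set T : ℝ × ℝ → ℝ := fun p => (p.1 / p.2) ^ γ with hTdef
  have hT : Measurable T := (measurable_fst.div measurable_snd).pow measurable_const
  -- law of the pair
  have hprod : μ.map (fun ω => (X ω, Y ω))
      = ((volume : Measure ℝ).withDensity ga).prod ((volume : Measure ℝ).withDensity gb) := by
    rw [← hlawX, ← hlawY]
    exact (indepFun_iff_map_prod_eq_prod_map_map hX.aemeasurable hY.aemeasurable).mp hind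
  have hmap : μ.map (fun ω => (X ω / Y ω) ^ γ)
      = (((volume : Measure ℝ).withDensity ga).prod
          ((volume : Measure ℝ).withDensity gb)).map T := by
    rw [← hprod, Measure.map_map hT (hX.prodMk hY)]
    rfl
  rw [hmap]
  ext s hs
  rw [Measure.map_apply hT hs, Measure.prod_apply_symm (hT hs), withDensity_apply _ hs]
  set ind : ℝ → ℝ≥0∞ := fun t => s.indicator (fun _ => (1:ℝ≥0∞)) t with hinddef
  have hind : Measurable ind := measurable_const.indicator hs
  -- slice rewrite
  have hslice : ∀ y : ℝ, ((volume : Measure ℝ).withDensity ga) ((fun x => (x, y)) ⁻¹' (T ⁻¹' s))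
      = ∫⁻ x, ind (T (x, y)) * ga x := by
    intro y
    rw [withDensity_apply _ ((hT hs).preimage measurable_prodMk_right),
      ← lintegral_indicator ((hT hs).preimage measurable_prodMk_right)]
    congr 1
    funext x
    by_cases hmem : T (x, y) ∈ s
    · simp [hinddef, indicator, hmem]
    · simp [hinddef, indicator, hmem]
  simp only [hslice]
  have hF : Measurable fun y => ∫⁻ x, ind (T (x, y)) * ga x := by
    apply Measurable.lintegral_prod_left (f := fun x y => ind (T (x, y)) * ga x)
    exact ((hind.comp hT).mul (hga.comp measurable_fst))
  rw [lintegral_withDensity_eq_lintegral_mul volume hgb hF]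
  simp only [Pi.mul_apply]
  -- restrict outer integral to Ioi 0
  rw [lintegral_eq_Ioi _ (fun y hy => by rw [hgbdef, gammaD_nonpos hy, zero_mul])]
  -- inner substitution x = y * u, for y > 0
  have hinner : ∀ y ∈ Ioi (0:ℝ), gb y * ∫⁻ x, ind (T (x, y)) * ga x
      = ∫⁻ u in Ioi (0:ℝ), ind (u ^ γ) * ENNReal.ofReal
          (u ^ (γ - 1) * Real.exp (-((1 + u) * y)) / (Real.Gamma γ * Real.Gamma (1 - γ))) := by
    intro y hy
    have hy' : (0:ℝ) < y := hy
    have h1 : ∫⁻ x, ind (T (x, y)) * ga x = ∫⁻ x in Ioi (0:ℝ), ind (T (x, y)) * ga x :=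
      lintegral_eq_Ioi _ (fun x hx => by rw [hgadef, gammaD_nonpos hx, mul_zero])
    have h2 : ∫⁻ x in Ioi (0:ℝ), ind (T (x, y)) * ga x
        = ∫⁻ u in Ioi (0:ℝ), ENNReal.ofReal |y| * (ind (T (y * u, y)) * ga (y * u)) := by
      conv_lhs => rw [← image_mul_left_Ioi0 hy']
      exact lintegral_image_eq_lintegral_abs_deriv_mul' (f' := fun _ => y) measurableSet_Ioi
        (fun u _ => by simpa using ((hasDerivAt_id u).const_mul y).hasDerivWithinAt)
        ((mul_right_injective₀ hy'.ne').injOn) _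
    rw [h1, h2, hgbdef, gammaD_pos hy', ← lintegral_const_mul' _ _ ENNReal.ofReal_ne_top]
    refine setLIntegral_congr_fun measurableSet_Ioi (fun u hu => ?_)
    have hu' : (0:ℝ) < u := hu
    have hyu : (0:ℝ) < y * u := mul_pos hy' hu'
    have hTval : T (y * u, y) = u ^ γ := by
      simp only [hTdef]
      rw [mul_div_cancel_left₀ _ hy'.ne']
    rw [hTval, abs_of_pos hy', hgadef, gammaD_pos hyu]
    rw [show ∀ a b c d : ℝ≥0∞, a * (b * (c * d)) = c * (a * (b * d)) from fun a b c d => by ring]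
    congr 1
    rw [← ENNReal.ofReal_mul hy'.le, ← ENNReal.ofReal_mul (by positivity)]
    congr 1
    have hexp : Real.exp (-y) * Real.exp (-(y * u)) = Real.exp (-((1 + u) * y)) := by
      rw [← Real.exp_add]; ring_nf
    have hyy : y ^ (1 - γ - 1) * y * y ^ (γ - 1) = 1 := by
      have h3 : y ^ (1 - γ - 1) * y ^ (γ - 1) = y ^ (-1 : ℝ) := by
        rw [← Real.rpow_add hy']; congr 1; ring
      calc y ^ (1 - γ - 1) * y * y ^ (γ - 1) = y ^ (1 - γ - 1) * y ^ (γ - 1) * y := by ring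
        _ = y ^ (-1 : ℝ) * y := by rw [h3]
        _ = 1 := by rw [Real.rpow_neg_one]; field_simp
    have hmul : (y * u) ^ (γ - 1) = y ^ (γ - 1) * u ^ (γ - 1) := Real.mul_rpow hy'.le hu'.le
    calc y ^ (1 - γ - 1) * Real.exp (-y) / Real.Gamma (1 - γ) *
          (y * ((y * u) ^ (γ - 1) * Real.exp (-(y * u)) / Real.Gamma γ))
        = (y ^ (1 - γ - 1) * y * y ^ (γ - 1)) * (u ^ (γ - 1) *
            (Real.exp (-y) * Real.exp (-(y * u)))) / (Real.Gamma γ * Real.Gamma (1 - γ)) := by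
          rw [hmul]; ring
      _ = u ^ (γ - 1) * Real.exp (-((1 + u) * y)) / (Real.Gamma γ * Real.Gamma (1 - γ)) := by
          rw [hyy, hexp, one_mul]
  rw [setLIntegral_congr_fun measurableSet_Ioi hinner]
  -- swap the two integrals
  rw [lintegral_lintegral_swap (by
    apply Measurable.aemeasurable
    apply Measurable.mul
    · exact hind.comp (measurable_snd.pow measurable_const)
    · apply ENNReal.measurable_ofReal.comp
      fun_prop)]
  -- inner integral over y
  have hinner2 : ∀ u ∈ Ioi (0:ℝ),
      (∫⁻ y in Ioi (0:ℝ), ind (u ^ γ) * ENNReal.ofReal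
          (u ^ (γ - 1) * Real.exp (-((1 + u) * y)) / (Real.Gamma γ * Real.Gamma (1 - γ))))
      = ind (u ^ γ) * ENNReal.ofReal
          (u ^ (γ - 1) * (1 / (1 + u)) * (Real.sin (π * γ) / π)) := by
    intro u hu
    have hu' : (0:ℝ) < u := hu
    have h1u : (0:ℝ) < 1 + u := by linarith
    have hconst : ∀ y : ℝ, ENNReal.ofReal
          (u ^ (γ - 1) * Real.exp (-((1 + u) * y)) / (Real.Gamma γ * Real.Gamma (1 - γ)))
        = ENNReal.ofReal (u ^ (γ - 1) / (Real.Gamma γ * Real.Gamma (1 - γ)))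
          * ENNReal.ofReal (Real.exp (-((1 + u) * y))) := by
      intro y
      rw [← ENNReal.ofReal_mul (by positivity)]
      congr 1
      ring
    simp only [hconst, ← mul_assoc]
    have hne : ind (u ^ γ) * ENNReal.ofReal (u ^ (γ - 1) / (Real.Gamma γ * Real.Gamma (1 - γ))) ≠ ∞ :=
      ENNReal.mul_ne_top (by by_cases h : u ^ γ ∈ s <;> simp [hinddef, indicator, h])
        ENNReal.ofReal_ne_top
    rw [lintegral_const_mul' _ _ hne, lint_exp h1u, mul_assoc]
    congr 1
    rw [← ENNReal.ofReal_mul (by positivity)]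
    congr 1
    rw [Real.Gamma_mul_Gamma_one_sub γ, div_div_eq_mul_div]
    ring
  rw [setLIntegral_congr_fun measurableSet_Ioi hinner2]
  -- final substitution u = t ^ α
  have h3 : ∫⁻ u in Ioi (0:ℝ), ind (u ^ γ) * ENNReal.ofReal
        (u ^ (γ - 1) * (1 / (1 + u)) * (Real.sin (π * γ) / π))
      = ∫⁻ t in Ioi (0:ℝ), ENNReal.ofReal |α * t ^ (α - 1)| *
          (ind ((t ^ α) ^ γ) * ENNReal.ofReal
            ((t ^ α) ^ (γ - 1) * (1 / (1 + t ^ α)) * (Real.sin (π * γ) / π))) := by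
    conv_lhs => rw [← image_rpow_Ioi0 hα0]
    refine lintegral_image_eq_lintegral_abs_deriv_mul' (f' := fun t => α * t ^ (α - 1))
      measurableSet_Ioi
      (fun t ht => (Real.hasDerivAt_rpow_const (Or.inl (ne_of_gt ht))).hasDerivWithinAt)
      (fun a ha b hb hab => ?_) _
    · have hmono : StrictMonoOn (fun t : ℝ => t ^ α) (Ioi 0) :=
        fun a ha b hb h => Real.rpow_lt_rpow (le_of_lt ha) h hα0
      exact hmono.injOn ha hb hab
  rw [h3]
  have h4 : ∀ t ∈ Ioi (0:ℝ), ENNReal.ofReal |α * t ^ (α - 1)| *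
          (ind ((t ^ α) ^ γ) * ENNReal.ofReal
            ((t ^ α) ^ (γ - 1) * (1 / (1 + t ^ α)) * (Real.sin (π * γ) / π)))
      = ind t * D t := by
    intro t ht
    have ht' : (0:ℝ) < t := ht
    have htα : (0:ℝ) < t ^ α := Real.rpow_pos_of_pos ht' α
    have h1t : (0:ℝ) < 1 + t ^ α := by linarith
    have htg : (t ^ α) ^ γ = t := by
      rw [← Real.rpow_mul ht'.le, hαγ, Real.rpow_one]
    have htg1 : (t ^ α) ^ (γ - 1) = t ^ (1 - α) := by
      rw [← Real.rpow_mul ht'.le]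
      congr 1
      have : α * (γ - 1) = α * γ - α := by ring
      rw [this, hαγ]
    have habs : |α * t ^ (α - 1)| = α * t ^ (α - 1) := abs_of_pos (by positivity)
    rw [htg, htg1, habs, hDdef]
    rw [show ∀ a b c : ℝ≥0∞, a * (b * c) = b * (a * c) from fun a b c => by ring]
    congr 1
    rw [← ENNReal.ofReal_mul (by positivity)]
    simp only [if_pos ht']
    congr 1
    have hpow : t ^ (α - 1) * t ^ (1 - α) = 1 := by
      rw [← Real.rpow_add ht']
      norm_num
    have hπγ : π * γ = π / α := by rw [hγdef]; ring
    calc α * t ^ (α - 1) * (t ^ (1 - α) * (1 / (1 + t ^ α)) * (Real.sin (π * γ) / π))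
        = (t ^ (α - 1) * t ^ (1 - α)) * (α * (Real.sin (π * γ) / π)) * (1 / (1 + t ^ α)) := by
          ring
      _ = Real.sin (π / α) / (π / α) * (1 / (1 + t ^ α)) := by
          rw [hpow, one_mul, hπγ,
            show Real.sin (π / α) / (π / α) = α * (Real.sin (π / α) / π) from by
              rw [div_div_eq_mul_div]; ring]
  rw [setLIntegral_congr_fun measurableSet_Ioi h4]
  -- conclude
  have h5 : ∀ t : ℝ, ind t * D t = s.indicator D t := by
    intro t
    by_cases hmem : t ∈ s
    · simp [hinddef, indicator, hmem]
    · simp [hinddef, indicator, hmem]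
  simp only [h5]
  rw [← lintegral_eq_Ioi _ (fun t htle => by
    simp only [hDdef, indicator]
    rw [if_neg (not_lt.mpr htle), ENNReal.ofReal_zero]
    simp), lintegral_indicator hs]
end

section
/- Suppose 1 < α < 2 and let a ≠ 0, q > 0. With u_q(x) = (1/π)∫₀^∞ cos(xξ)/(q+ξ^α) dξ and h(x) = (1/π)∫₀^∞ (1-cos(xξ))/ξ^α dξ, it holds that lim_{x→0} (u_q(a-x) - u_q(a))/h(x) = 0. -/
open Real MeasureTheory Filter Topology

/-- `q`-resolvent density of the symmetric `α`-stable Lévy process. -/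
noncomputable def uRes (α q x : ℝ) : ℝ :=
  (1 / π) * ∫ ξ in Set.Ioi (0:ℝ), Real.cos (x * ξ) / (q + ξ ^ α)

/-- Harmonic function of the symmetric `α`-stable Lévy process. -/
noncomputable def hFun (α x : ℝ) : ℝ :=
  (1 / π) * ∫ ξ in Set.Ioi (0:ℝ), (1 - Real.cos (x * ξ)) / ξ ^ α


lemma one_sub_cos_le_half_sq (t : ℝ) : 1 - Real.cos t ≤ t ^ 2 / 2 := by
  have h1 : Real.sin (t / 2) ^ 2 = 1 / 2 - Real.cos (2 * (t / 2)) / 2 :=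
    Real.sin_sq_eq_half_sub (t / 2)
  have h2 : Real.sin (t / 2) ^ 2 ≤ (t / 2) ^ 2 := Real.sin_sq_le_sq
  have : 2 * (t / 2) = t := by ring
  rw [this] at h1
  nlinarith

lemma abs_cos_sub_cos_le (x y : ℝ) : |Real.cos x - Real.cos y| ≤ |x - y| := by
  rw [Real.cos_sub_cos]
  have h1 : |Real.sin ((x + y) / 2)| ≤ 1 := Real.abs_sin_le_one _
  have h2 : |Real.sin ((x - y) / 2)| ≤ |(x - y) / 2| := Real.abs_sin_le_abs
  have h3 : |(x - y) / 2| = |x - y| / 2 := by rw [abs_div]; norm_num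
  calc |(-2) * Real.sin ((x + y) / 2) * Real.sin ((x - y) / 2)|
      = 2 * |Real.sin ((x + y) / 2)| * |Real.sin ((x - y) / 2)| := by
        rw [abs_mul, abs_mul]; norm_num
    _ ≤ 2 * 1 * (|x - y| / 2) := by
        apply mul_le_mul _ (h3 ▸ h2) (abs_nonneg _) (by norm_num)
        apply mul_le_mul_of_nonneg_left h1 (by norm_num)
    _ = |x - y| := by ring

/-- Integrability combinator: continuous on `Ioi 0`, power bound near 0 and at infinity. -/
lemma integrableOn_of_bounds {f : ℝ → ℝ} {p r C1 C2 : ℝ}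
    (hf : ContinuousOn f (Set.Ioi 0))
    (hp : -1 < p) (hr : r < -1)
    (hb1 : ∀ ξ ∈ Set.Ioc (0:ℝ) 1, |f ξ| ≤ C1 * ξ ^ p)
    (hb2 : ∀ ξ ∈ Set.Ioi (1:ℝ), |f ξ| ≤ C2 * ξ ^ r) :
    IntegrableOn f (Set.Ioi 0) := by
  have hunion : Set.Ioc (0:ℝ) 1 ∪ Set.Ioi 1 = Set.Ioi 0 := Set.Ioc_union_Ioi_eq_Ioi zero_le_one
  rw [← hunion]
  apply MeasureTheory.IntegrableOn.union
  · have hint : IntegrableOn (fun ξ : ℝ => C1 * ξ ^ p) (Set.Ioc (0:ℝ) 1) := by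
      have := intervalIntegral.intervalIntegrable_rpow' hp (a := 0) (b := 1)
      rw [intervalIntegrable_iff_integrableOn_Ioc_of_le zero_le_one] at this
      exact this.const_mul C1
    apply hint.mono' ((hf.mono (Set.Ioc_subset_Ioi_self)).aestronglyMeasurable measurableSet_Ioc)
    exact (ae_restrict_iff' measurableSet_Ioc).mpr (.of_forall hb1)
  · have hint : IntegrableOn (fun ξ : ℝ => C2 * ξ ^ r) (Set.Ioi (1:ℝ)) :=
      (integrableOn_Ioi_rpow_of_lt hr one_pos).const_mul C2
    apply hint.mono' ((hf.mono (Set.Ioi_subset_Ioi zero_le_one)).aestronglyMeasurable measurableSet_Ioi)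
    exact (ae_restrict_iff' measurableSet_Ioi).mpr (.of_forall hb2)

noncomputable def vvAux (α q ξ : ℝ) : ℝ := 1 / (ξ ^ α * (q + ξ ^ α))

noncomputable def FFAux (α q c : ℝ) : ℝ :=
  ∫ ξ in Set.Ioi (0:ℝ), (1 - Real.cos (c * ξ)) * vvAux α q ξ

section
variable {α q : ℝ} (h1 : 1 < α) (h2 : α < 2) (hq : 0 < q)

lemma rpow_pos' {ξ : ℝ} (hξ : ξ ∈ Set.Ioi (0:ℝ)) : 0 < ξ ^ α :=
  Real.rpow_pos_of_pos hξ α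

include hq in
lemma denom_pos {ξ : ℝ} (hξ : ξ ∈ Set.Ioi (0:ℝ)) : 0 < q + ξ ^ α :=
  by have := rpow_pos' (α := α) hξ; linarith

lemma contOn_rpow : ContinuousOn (fun ξ : ℝ => ξ ^ α) (Set.Ioi 0) :=
  fun x hx => (Real.continuousAt_rpow_const x α (Or.inl (ne_of_gt hx))).continuousWithinAt

include hq in
lemma contOn_vv : ContinuousOn (fun ξ => vvAux α q ξ) (Set.Ioi 0) := by
  apply continuousOn_const.div ((contOn_rpow (α := α)).mul (continuousOn_const.add contOn_rpow))
  intro x hx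
  exact ne_of_gt (mul_pos (rpow_pos' hx) (denom_pos hq hx))

include hq in
lemma vv_nonneg {ξ : ℝ} (hξ : ξ ∈ Set.Ioi (0:ℝ)) : 0 ≤ vvAux α q ξ :=
  le_of_lt (by exact div_pos one_pos (mul_pos (rpow_pos' hξ) (denom_pos hq hξ)))
end


section
variable {α q : ℝ} (h1 : 1 < α) (h2 : α < 2) (hq : 0 < q)

include h1 hq in
lemma integrable_w (c : ℝ) :
    IntegrableOn (fun ξ : ℝ => Real.cos (c * ξ) / (q + ξ ^ α)) (Set.Ioi 0) := by
  apply integrableOn_of_bounds (p := 0) (r := -α) (C1 := 1/q) (C2 := 1)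
  · exact (Real.continuous_cos.comp (continuous_const.mul continuous_id)).continuousOn.div
      (continuousOn_const.add contOn_rpow) (fun x hx => ne_of_gt (denom_pos hq hx))
  · norm_num
  · linarith
  · intro ξ hξ
    have hξ0 : (0:ℝ) < ξ := hξ.1
    have hd := denom_pos (α := α) hq (Set.Ioc_subset_Ioi_self hξ)
    have hξα := rpow_pos' (α := α) (Set.mem_Ioi.mpr hξ0)
    rw [abs_div, abs_of_pos hd, Real.rpow_zero, mul_one]
    calc |Real.cos (c * ξ)| / (q + ξ ^ α) ≤ 1 / (q + ξ ^ α) := by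
          gcongr; exact Real.abs_cos_le_one _
      _ ≤ 1 / q := by gcongr; linarith
  · intro ξ hξ
    have hξ0 : (0:ℝ) < ξ := lt_trans one_pos hξ
    have hd := denom_pos (α := α) hq (Set.mem_Ioi.mpr hξ0)
    have hξα := rpow_pos' (α := α) (Set.mem_Ioi.mpr hξ0)
    rw [abs_div, abs_of_pos hd, one_mul, Real.rpow_neg hξ0.le, ← one_div]
    calc |Real.cos (c * ξ)| / (q + ξ ^ α) ≤ 1 / (q + ξ ^ α) := by
          gcongr; exact Real.abs_cos_le_one _
      _ ≤ 1 / ξ ^ α := by gcongr; linarith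

include h1 h2 in
lemma integrable_g (c : ℝ) :
    IntegrableOn (fun ξ : ℝ => (1 - Real.cos (c * ξ)) / ξ ^ α) (Set.Ioi 0) := by
  apply integrableOn_of_bounds (p := 2 - α) (r := -α) (C1 := c^2/2) (C2 := 2)
  · exact ((continuous_const.sub (Real.continuous_cos.comp
      (continuous_const.mul continuous_id))).continuousOn).div contOn_rpow
      (fun x hx => ne_of_gt (rpow_pos' hx))
  · linarith
  · linarith
  · intro ξ hξ
    have hξ0 : (0:ℝ) < ξ := hξ.1
    have hξα := rpow_pos' (α := α) (Set.mem_Ioi.mpr hξ0)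
    have hnn : 0 ≤ 1 - Real.cos (c * ξ) := by
      have := Real.cos_le_one (c * ξ); linarith
    have hbd : 1 - Real.cos (c * ξ) ≤ c ^ 2 * ξ ^ 2 / 2 := by
      have := one_sub_cos_le_half_sq (c * ξ); nlinarith
    have hrw : ξ ^ (2 - α) = ξ ^ (2:ℕ) / ξ ^ α := by
      rw [Real.rpow_sub hξ0, Real.rpow_two]
    rw [abs_div, abs_of_pos hξα, abs_of_nonneg hnn, hrw]
    calc (1 - Real.cos (c * ξ)) / ξ ^ α ≤ (c ^ 2 * ξ ^ 2 / 2) / ξ ^ α := by gcongr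
      _ = c ^ 2 / 2 * (ξ ^ (2:ℕ) / ξ ^ α) := by ring
  · intro ξ hξ
    have hξ0 : (0:ℝ) < ξ := lt_trans one_pos hξ
    have hξα := rpow_pos' (α := α) (Set.mem_Ioi.mpr hξ0)
    have hnn : 0 ≤ 1 - Real.cos (c * ξ) := by
      have := Real.cos_le_one (c * ξ); linarith
    have hbd : 1 - Real.cos (c * ξ) ≤ 2 := by
      have := Real.neg_one_le_cos (c * ξ); linarith
    rw [abs_div, abs_of_pos hξα, abs_of_nonneg hnn, Real.rpow_neg hξ0.le]
    rw [← div_eq_mul_inv]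
    gcongr

include h1 h2 hq in
lemma integrable_gv (c : ℝ) :
    IntegrableOn (fun ξ : ℝ => (1 - Real.cos (c * ξ)) * vvAux α q ξ) (Set.Ioi 0) := by
  apply integrableOn_of_bounds (p := 2 - α) (r := -α) (C1 := c^2/(2*q)) (C2 := 2/q)
  · exact ((continuous_const.sub (Real.continuous_cos.comp
      (continuous_const.mul continuous_id))).continuousOn).mul (contOn_vv hq)
  · linarith
  · linarith
  · intro ξ hξ
    have hξ0 : (0:ℝ) < ξ := hξ.1
    have hξα := rpow_pos' (α := α) (Set.mem_Ioi.mpr hξ0)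
    have hd := denom_pos (α := α) hq (Set.mem_Ioi.mpr hξ0)
    have hnn : 0 ≤ 1 - Real.cos (c * ξ) := by
      have := Real.cos_le_one (c * ξ); linarith
    have hbd : 1 - Real.cos (c * ξ) ≤ c ^ 2 * ξ ^ 2 / 2 := by
      have := one_sub_cos_le_half_sq (c * ξ); nlinarith
    have hvv : vvAux α q ξ ≤ 1 / (ξ ^ α * q) := by
      unfold vvAux
      exact one_div_le_one_div_of_le (by positivity) (by nlinarith)
    have hvnn := vv_nonneg (α := α) hq (Set.mem_Ioi.mpr hξ0)
    have hrw : ξ ^ (2 - α) = ξ ^ (2:ℕ) / ξ ^ α := by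
      rw [Real.rpow_sub hξ0, Real.rpow_two]
    rw [abs_mul, abs_of_nonneg hnn, abs_of_nonneg hvnn, hrw]
    calc (1 - Real.cos (c * ξ)) * vvAux α q ξ
        ≤ (c ^ 2 * ξ ^ 2 / 2) * (1 / (ξ ^ α * q)) := by
          apply mul_le_mul hbd hvv hvnn (by positivity)
      _ = c ^ 2 / (2 * q) * (ξ ^ (2:ℕ) / ξ ^ α) := by field_simp
  · intro ξ hξ
    have hξ0 : (0:ℝ) < ξ := lt_trans one_pos hξ
    have hξα := rpow_pos' (α := α) (Set.mem_Ioi.mpr hξ0)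
    have hd := denom_pos (α := α) hq (Set.mem_Ioi.mpr hξ0)
    have hnn : 0 ≤ 1 - Real.cos (c * ξ) := by
      have := Real.cos_le_one (c * ξ); linarith
    have hbd : 1 - Real.cos (c * ξ) ≤ 2 := by
      have := Real.neg_one_le_cos (c * ξ); linarith
    have hvv : vvAux α q ξ ≤ 1 / (ξ ^ α * q) := by
      unfold vvAux
      exact one_div_le_one_div_of_le (by positivity) (by nlinarith)
    have hvnn := vv_nonneg (α := α) hq (Set.mem_Ioi.mpr hξ0)
    rw [abs_mul, abs_of_nonneg hnn, abs_of_nonneg hvnn, Real.rpow_neg hξ0.le]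
    calc (1 - Real.cos (c * ξ)) * vvAux α q ξ ≤ 2 * (1 / (ξ ^ α * q)) := by
          apply mul_le_mul hbd hvv hvnn (by norm_num)
      _ = 2 / q * (ξ ^ α)⁻¹ := by field_simp
end

section
variable {α q : ℝ} (h1 : 1 < α) (h2 : α < 2) (hq : 0 < q)

include h1 h2 hq in
lemma uRes_decomp (c : ℝ) :
    uRes α q c = (1 / π) * (∫ ξ in Set.Ioi (0:ℝ), 1 / (q + ξ ^ α))
      - hFun α c + (q / π) * FFAux α q c := by
  have hw := integrable_w (α := α) h1 hq c
  have hw0 : IntegrableOn (fun ξ : ℝ => 1 / (q + ξ ^ α)) (Set.Ioi 0) := by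
    have := integrable_w (α := α) h1 hq 0
    simpa using this
  have hg := integrable_g (α := α) h1 h2 c
  have hgv := integrable_gv (α := α) h1 h2 hq c
  have key : ∫ ξ in Set.Ioi (0:ℝ), Real.cos (c * ξ) / (q + ξ ^ α)
      = ∫ ξ in Set.Ioi (0:ℝ), (1 / (q + ξ ^ α) - (1 - Real.cos (c * ξ)) / ξ ^ α
          + q * ((1 - Real.cos (c * ξ)) * vvAux α q ξ)) := by
    apply setIntegral_congr_fun measurableSet_Ioi
    intro ξ hξ
    have hA := rpow_pos' (α := α) hξ
    have hB := denom_pos (α := α) hq hξ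
    unfold vvAux
    field_simp
    ring
  have hfg : IntegrableOn
      (fun ξ : ℝ => 1 / (q + ξ ^ α) - (1 - Real.cos (c * ξ)) / ξ ^ α) (Set.Ioi 0) := hw0.sub hg
  rw [uRes, key, MeasureTheory.integral_add hfg (hgv.const_mul q),
    MeasureTheory.integral_sub hw0 hg, MeasureTheory.integral_const_mul]
  rw [hFun, FFAux]
  ring
end

section
variable {α q : ℝ} (h1 : 1 < α) (h2 : α < 2) (hq : 0 < q)

include h1 h2 in
lemma hFun_scaling (x : ℝ) : hFun α x = |x| ^ (α - 1) * hFun α 1 := by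
  by_cases hx : x = 0
  · subst hx
    rw [abs_zero, Real.zero_rpow (ne_of_gt (by linarith) : α - 1 ≠ 0)]
    simp [hFun]
  · have hb : 0 < |x| := abs_pos.mpr hx
    have step1 : Set.EqOn (fun ξ : ℝ => (1 - Real.cos (x * ξ)) / ξ ^ α)
        (fun ξ : ℝ => |x| ^ α * ((1 - Real.cos (|x| * ξ)) / (|x| * ξ) ^ α)) (Set.Ioi 0) := by
      intro ξ hξ
      have hξ0 : (0:ℝ) < ξ := hξ
      have hcos : Real.cos (x * ξ) = Real.cos (|x| * ξ) := by
        rcases abs_choice x with h | h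
        · rw [h]
        · rw [h, neg_mul, Real.cos_neg]
      have hmul : (|x| * ξ) ^ α = |x| ^ α * ξ ^ α := Real.mul_rpow hb.le hξ0.le
      have hξα := rpow_pos' (α := α) hξ
      have hbα : (0:ℝ) < |x| ^ α := Real.rpow_pos_of_pos hb α
      simp only [hcos, hmul]
      field_simp
    have step2 : (∫ ξ in Set.Ioi (0:ℝ), (1 - Real.cos (x * ξ)) / ξ ^ α)
        = |x| ^ α * ∫ ξ in Set.Ioi (0:ℝ), (1 - Real.cos (|x| * ξ)) / (|x| * ξ) ^ α := by
      rw [setIntegral_congr_fun measurableSet_Ioi step1, MeasureTheory.integral_const_mul]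
    have step3 : (∫ ξ in Set.Ioi (0:ℝ), (1 - Real.cos (|x| * ξ)) / (|x| * ξ) ^ α)
        = |x|⁻¹ • ∫ t in Set.Ioi (0:ℝ), (1 - Real.cos t) / t ^ α := by
      have := MeasureTheory.integral_comp_mul_left_Ioi
        (fun t : ℝ => (1 - Real.cos t) / t ^ α) 0 hb
      rw [mul_zero] at this
      exact this
    have hpow : |x| ^ α * |x|⁻¹ = |x| ^ (α - 1) := by
      rw [Real.rpow_sub hb, Real.rpow_one, div_eq_mul_inv]
    rw [hFun, hFun, step2, step3, smul_eq_mul]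
    simp only [one_mul]
    rw [← hpow]
    ring

include h1 h2 in
lemma hFun_one_pos : 0 < hFun α 1 := by
  have hInt : IntegrableOn (fun ξ : ℝ => (1 - Real.cos (1 * ξ)) / ξ ^ α) (Set.Ioi 0) :=
    integrable_g h1 h2 1
  have hnn : 0 ≤ᵐ[volume.restrict (Set.Ioi (0:ℝ))]
      fun ξ : ℝ => (1 - Real.cos (1 * ξ)) / ξ ^ α := by
    refine (ae_restrict_iff' measurableSet_Ioi).mpr (.of_forall fun ξ hξ => ?_)
    have hc := Real.cos_le_one (1 * ξ)
    have hr := rpow_pos' (α := α) hξ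
    exact div_nonneg (by linarith) hr.le
  have hsub : (∫ ξ in Set.Ioc (1:ℝ) 3, (1 - Real.cos (1 * ξ)) / ξ ^ α)
      ≤ ∫ ξ in Set.Ioi (0:ℝ), (1 - Real.cos (1 * ξ)) / ξ ^ α := by
    apply setIntegral_mono_set hInt hnn
    exact HasSubset.Subset.eventuallyLE (fun ξ hξ => lt_trans one_pos hξ.1)
  have hpos : 0 < ∫ ξ in Set.Ioc (1:ℝ) 3, (1 - Real.cos (1 * ξ)) / ξ ^ α := by
    rw [← intervalIntegral.integral_of_le (by norm_num : (1:ℝ) ≤ 3)]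
    apply intervalIntegral.intervalIntegral_pos_of_pos_on
    · exact (intervalIntegrable_iff_integrableOn_Ioc_of_le (by norm_num)).mpr
        (hInt.mono_set fun ξ hξ => lt_trans one_pos hξ.1)
    · intro ξ hξ
      have hξ0 : (0:ℝ) < ξ := lt_trans one_pos hξ.1
      have hξα := Real.rpow_pos_of_pos hξ0 α
      have hπ : ξ ≤ π := le_of_lt (lt_trans hξ.2 Real.pi_gt_three)
      have hmono : Real.cos ξ ≤ Real.cos 1 :=
        Real.cos_le_cos_of_nonneg_of_le_pi zero_le_one hπ hξ.1.le
      have hcos1 : Real.cos 1 < 1 := by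
        have hb := Real.cos_le_one_sub_mul_cos_sq (x := 1)
          (by rw [abs_one]; exact le_of_lt (by linarith [Real.pi_gt_three]))
        have hπ2 : 0 < 2 / π ^ 2 * 1 ^ 2 := by
          have := Real.pi_pos; positivity
        linarith
      rw [one_mul]
      have : 0 < 1 - Real.cos ξ := by linarith
      positivity
    · norm_num
  rw [hFun]
  have hπ := Real.pi_pos
  exact mul_pos (by positivity) (lt_of_lt_of_le hpos hsub)
end

section
variable {α q : ℝ} (h1 : 1 < α) (h2 : α < 2) (hq : 0 < q)

include h1 h2 hq in
lemma integrable_xvv : IntegrableOn (fun ξ : ℝ => ξ * vvAux α q ξ) (Set.Ioi 0) := by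
  apply integrableOn_of_bounds (p := 1 - α) (r := 1 - 2*α) (C1 := 1/q) (C2 := 1)
  · exact continuousOn_id.mul (contOn_vv hq)
  · linarith
  · linarith
  · intro ξ hξ
    have hξ0 : (0:ℝ) < ξ := hξ.1
    have hξα := rpow_pos' (α := α) (Set.mem_Ioi.mpr hξ0)
    have hd := denom_pos (α := α) hq (Set.mem_Ioi.mpr hξ0)
    have hvnn := vv_nonneg (α := α) hq (Set.mem_Ioi.mpr hξ0)
    have hvv : vvAux α q ξ ≤ 1 / (ξ ^ α * q) := by
      unfold vvAux
      exact one_div_le_one_div_of_le (by positivity) (by nlinarith)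
    have hrw : ξ ^ (1 - α) = ξ / ξ ^ α := by
      rw [Real.rpow_sub hξ0, Real.rpow_one]
    rw [abs_mul, abs_of_pos hξ0, abs_of_nonneg hvnn, hrw]
    calc ξ * vvAux α q ξ ≤ ξ * (1 / (ξ ^ α * q)) := by gcongr
      _ = 1 / q * (ξ / ξ ^ α) := by field_simp
  · intro ξ hξ
    have hξ0 : (0:ℝ) < ξ := lt_trans one_pos hξ
    have hξα := rpow_pos' (α := α) (Set.mem_Ioi.mpr hξ0)
    have hd := denom_pos (α := α) hq (Set.mem_Ioi.mpr hξ0)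
    have hvnn := vv_nonneg (α := α) hq (Set.mem_Ioi.mpr hξ0)
    have hvv : vvAux α q ξ ≤ 1 / (ξ ^ α * ξ ^ α) := by
      unfold vvAux
      exact one_div_le_one_div_of_le (by positivity) (by nlinarith)
    have hrw : ξ ^ (1 - 2*α) = ξ / (ξ ^ α * ξ ^ α) := by
      rw [show (1 - 2*α) = 1 - α - α by ring, Real.rpow_sub hξ0, Real.rpow_sub hξ0,
        Real.rpow_one, div_div]
    rw [abs_mul, abs_of_pos hξ0, abs_of_nonneg hvnn, hrw, one_mul]
    calc ξ * vvAux α q ξ ≤ ξ * (1 / (ξ ^ α * ξ ^ α)) := by gcongr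
      _ = ξ / (ξ ^ α * ξ ^ α) := by ring

include h1 h2 hq in
lemma FF_lip (a x : ℝ) :
    |FFAux α q (a - x) - FFAux α q a|
      ≤ (∫ ξ in Set.Ioi (0:ℝ), ξ * vvAux α q ξ) * |x| := by
  have hgv1 := integrable_gv (α := α) h1 h2 hq (a - x)
  have hgv2 := integrable_gv (α := α) h1 h2 hq a
  have hxvv := integrable_xvv (α := α) h1 h2 hq
  rw [FFAux, FFAux, ← MeasureTheory.integral_sub hgv1 hgv2]
  have hbound : Integrable (fun ξ : ℝ => |x| * (ξ * vvAux α q ξ))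
      (volume.restrict (Set.Ioi 0)) := hxvv.const_mul _
  have key : ‖∫ ξ in Set.Ioi (0:ℝ),
      ((1 - Real.cos ((a - x) * ξ)) * vvAux α q ξ - (1 - Real.cos (a * ξ)) * vvAux α q ξ)‖
      ≤ ∫ ξ in Set.Ioi (0:ℝ), |x| * (ξ * vvAux α q ξ) := by
    apply MeasureTheory.norm_integral_le_of_norm_le hbound
    refine (ae_restrict_iff' measurableSet_Ioi).mpr (.of_forall fun ξ hξ => ?_)
    have hξ0 : (0:ℝ) < ξ := hξ
    have hvnn := vv_nonneg (α := α) hq hξ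
    have e : (1 - Real.cos ((a - x) * ξ)) * vvAux α q ξ - (1 - Real.cos (a * ξ)) * vvAux α q ξ
        = (Real.cos (a * ξ) - Real.cos ((a - x) * ξ)) * vvAux α q ξ := by ring
    rw [e, Real.norm_eq_abs, abs_mul, abs_of_nonneg hvnn]
    calc |Real.cos (a * ξ) - Real.cos ((a - x) * ξ)| * vvAux α q ξ
        ≤ |a * ξ - (a - x) * ξ| * vvAux α q ξ := by
          exact mul_le_mul_of_nonneg_right (_root_.abs_cos_sub_cos_le _ _) hvnn
      _ = |x| * (ξ * vvAux α q ξ) := by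
          rw [show a * ξ - (a - x) * ξ = x * ξ by ring, abs_mul, abs_of_pos hξ0]
          ring
  rw [MeasureTheory.integral_const_mul] at key
  rw [Real.norm_eq_abs] at key
  calc |∫ ξ in Set.Ioi (0:ℝ), ((1 - Real.cos ((a - x) * ξ)) * vvAux α q ξ
        - (1 - Real.cos (a * ξ)) * vvAux α q ξ)| ≤ |x| * ∫ ξ in Set.Ioi (0:ℝ), ξ * vvAux α q ξ := key
    _ = (∫ ξ in Set.Ioi (0:ℝ), ξ * vvAux α q ξ) * |x| := mul_comm _ _
end

theorem stmt_13 (α q a : ℝ) (h1 : 1 < α) (h2 : α < 2) (hq : 0 < q) (ha : a ≠ 0) :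
    Tendsto (fun x => (uRes α q (a - x) - uRes α q a) / hFun α x)
      (𝓝[≠] 0) (𝓝 0) := by
  have hπ := Real.pi_pos
  set p := α - 1 with hpdef
  have hp0 : 0 < p := by simp only [hpdef]; linarith
  have hp1 : p < 1 := by simp only [hpdef]; linarith
  have hH : 0 < hFun α 1 := hFun_one_pos h1 h2
  set H := hFun α 1 with hHdef
  set K := ∫ ξ in Set.Ioi (0:ℝ), ξ * vvAux α q ξ with hKdef
  clear_value H K
  have hK0 : 0 ≤ K := by
    rw [hKdef]
    exact MeasureTheory.setIntegral_nonneg measurableSet_Ioi fun ξ hξ =>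
      mul_nonneg (le_of_lt hξ) (vv_nonneg (α := α) hq hξ)
  have hscal : ∀ x : ℝ, hFun α x = |x| ^ p * H := fun x => by
    rw [hpdef, hHdef]; exact hFun_scaling h1 h2 x
  have hp2 : p < 2 := by simp only [hpdef]; linarith
  clear_value p
  -- the limit |x| ^ (1 - p) → 0
  have hrtend : Tendsto (fun x : ℝ => |x| ^ (1 - p)) (𝓝[≠] (0:ℝ)) (𝓝 0) := by
    have habs : Tendsto (fun x : ℝ => |x|) (𝓝[≠] (0:ℝ)) (𝓝 0) :=
      (continuous_abs.tendsto' 0 0 abs_zero).mono_left nhdsWithin_le_nhds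
    have hc : ContinuousAt (fun t : ℝ => t ^ (1 - p)) 0 :=
      Real.continuousAt_rpow_const 0 (1 - p) (Or.inr (by linarith))
    have := hc.tendsto.comp habs
    simpa [Function.comp_def, Real.zero_rpow (ne_of_gt (by linarith : (0:ℝ) < 1 - p))] using this
  -- the second factor x / |x| ^ p → 0
  have hx2 : Tendsto (fun x : ℝ => x / |x| ^ p) (𝓝[≠] (0:ℝ)) (𝓝 0) := by
    apply squeeze_zero_norm' ?_ hrtend
    filter_upwards [self_mem_nhdsWithin] with x hx
    have hx0 : x ≠ 0 := hx
    have hbx : 0 < |x| := abs_pos.mpr hx0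
    have heq : |x / |x| ^ p| = |x| ^ (1 - p) := by
      rw [abs_div, abs_of_pos (Real.rpow_pos_of_pos hbx p), Real.rpow_sub hbx, Real.rpow_one]
    rw [Real.norm_eq_abs, heq]
  -- the rpow part: φ differentiable at 0
  have hane : (a - 0)^2 ≠ 0 := by simpa using pow_ne_zero 2 ha
  have hu : HasDerivAt (fun x : ℝ => (a - x)^2) (2 * (a - 0)^1 * (0 - 1)) 0 :=
    (((hasDerivAt_const (0:ℝ) a).sub (hasDerivAt_id 0)).pow 2)
  have hrp : HasDerivAt (fun y : ℝ => y ^ (p/2)) ((p/2) * ((a - 0)^2) ^ (p/2 - 1)) ((a - 0)^2) :=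
    Real.hasDerivAt_rpow_const (Or.inl hane)
  have hφ : HasDerivAt (fun x : ℝ => ((a - x)^2) ^ (p/2))
      ((p/2) * ((a - 0)^2) ^ (p/2 - 1) * (2 * (a - 0)^1 * (0 - 1))) 0 :=
    by have := HasDerivAt.comp 0 hrp hu; exact this
  set d : ℝ := (p/2) * ((a - 0)^2) ^ (p/2 - 1) * (2 * (a - 0)^1 * (0 - 1)) with hd
  have hslope : Tendsto (fun x : ℝ => (((a - x)^2) ^ (p/2) - ((a - 0)^2) ^ (p/2)) / x)
      (𝓝[≠] (0:ℝ)) (𝓝 d) := by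
    have := hasDerivAt_iff_tendsto_slope.mp hφ
    apply this.congr'
    filter_upwards [self_mem_nhdsWithin] with x hx
    rw [slope_def_field]
    simp
  -- identification |a - x| ^ p = ((a-x)^2) ^ (p/2)
  have hphi : ∀ x : ℝ, |a - x| ^ p = ((a - x)^2) ^ (p/2) := by
    intro x
    rw [← sq_abs (a - x), ← Real.rpow_natCast |a - x| 2, ← Real.rpow_mul (abs_nonneg _)]
    congr 1
    push_cast
    ring
  -- T1
  have T1 : Tendsto (fun x : ℝ => (hFun α a - hFun α (a - x)) / hFun α x)
      (𝓝[≠] (0:ℝ)) (𝓝 0) := by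
    have hmul : Tendsto (fun x : ℝ =>
        ((((a - 0)^2) ^ (p/2) - ((a - x)^2) ^ (p/2)) / x) * (x / |x| ^ p))
        (𝓝[≠] (0:ℝ)) (𝓝 ((-d) * 0)) := by
      apply Tendsto.mul ?_ hx2
      have : (fun x : ℝ => (((a - 0)^2) ^ (p/2) - ((a - x)^2) ^ (p/2)) / x)
          = fun x : ℝ => -(((((a - x)^2) ^ (p/2)) - ((a - 0)^2) ^ (p/2)) / x) := by
        funext x; ring
      rw [this]
      exact hslope.neg
    rw [neg_mul, mul_zero, neg_zero] at hmul
    apply hmul.congr'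
    filter_upwards [self_mem_nhdsWithin] with x hx
    have hx0 : x ≠ 0 := hx
    have hbx : 0 < |x| := abs_pos.mpr hx0
    have hbxp : 0 < |x| ^ p := Real.rpow_pos_of_pos hbx p
    rw [hscal a, hscal (a - x), hscal x]
    rw [← hphi, ← hphi]
    simp only [sub_zero]
    rw [div_mul_div_comm, mul_comm (|a| ^ p - |a - x| ^ p) x, mul_div_mul_left _ _ hx0,
      ← sub_mul, mul_div_mul_right _ _ (ne_of_gt hH)]
  -- T2
  have T2 : Tendsto (fun x : ℝ =>
      (q / π) * (FFAux α q (a - x) - FFAux α q a) / hFun α x) (𝓝[≠] (0:ℝ)) (𝓝 0) := by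
    have hC : Tendsto (fun x : ℝ => ((q / π) * K / H) * |x| ^ (1 - p))
        (𝓝[≠] (0:ℝ)) (𝓝 (((q / π) * K / H) * 0)) := hrtend.const_mul _
    rw [mul_zero] at hC
    apply squeeze_zero_norm' ?_ hC
    filter_upwards [self_mem_nhdsWithin] with x hx
    have hx0 : x ≠ 0 := hx
    have hbx : 0 < |x| := abs_pos.mpr hx0
    have hbxp : 0 < |x| ^ p := Real.rpow_pos_of_pos hbx p
    have hden : 0 < hFun α x := by rw [hscal x]; positivity
    have hlip := FF_lip (α := α) h1 h2 hq a x
    rw [← hKdef] at hlip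
    rw [Real.norm_eq_abs, abs_div, abs_of_pos hden, abs_mul,
      abs_of_pos (by positivity : (0:ℝ) < q / π), hscal x]
    calc q / π * |FFAux α q (a - x) - FFAux α q a| / (|x| ^ p * H)
        ≤ q / π * (K * |x|) / (|x| ^ p * H) := by gcongr
      _ = ((q / π) * K / H) * (|x| / |x| ^ p) := by field_simp
      _ = ((q / π) * K / H) * |x| ^ (1 - p) := by
          rw [Real.rpow_sub hbx, Real.rpow_one]
  -- combine
  have hsum := T1.add T2
  rw [add_zero] at hsum
  apply hsum.congr'
  filter_upwards [self_mem_nhdsWithin] with x hx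
  rw [eq_comm, ← add_div]
  congr 1
  rw [uRes_decomp h1 h2 hq (a - x), uRes_decomp h1 h2 hq a]
  ring
end
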